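/- The operators e_i^* and f_i^* on fully-commutative decreasing factorizations are partial inverses: if f_i^*(h) ≠ 0 then e_i^*(f_i^*(h)) = h, and if e_i^*(h) ≠ 0 then f_i^*(e_i^*(h)) = h. -/

import Mathlib

/-- One elementary relation of the 0-Hecke monoid applied somewhere inside a word
(letters are positive integers; `p + 1 < q ∨ q + 1 < p` encodes `|p - q| > 1`). -/
inductive HeckeStep : List ℕ → List ℕ → Prop
  | comm (u v : List ℕ) (p q : ℕ) (hpq : p + 1 < q ∨ q + 1 < p) :
      HeckeStep (u ++ p :: q :: v) (u ++ q :: p :: v)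
  | braid (u v : List ℕ) (p q : ℕ) :
      HeckeStep (u ++ p :: q :: p :: v) (u ++ q :: p :: q :: v)
  | idem (u v : List ℕ) (p : ℕ) :
      HeckeStep (u ++ p :: p :: v) (u ++ p :: v)

/-- 0-Hecke equivalence of words. -/
def HeckeEquiv : List ℕ → List ℕ → Prop := Relation.EqvGen HeckeStep

/-- A word contains a consecutive braid subword `i (i+1) i` or `(i+1) i (i+1)`
(the latter is the form `i (i-1) i`). -/
def ContainsBraid (w : List ℕ) : Prop :=
  ∃ (u v : List ℕ) (i : ℕ),
    w = u ++ i :: (i+1) :: i :: v ∨ w = u ++ (i+1) :: i :: (i+1) :: v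

/-- A word is fully-commutative if no 0-Hecke equivalent word contains a
consecutive braid subword. -/
def FullyCommutative (w : List ℕ) : Prop :=
  ∀ w', HeckeEquiv w w' → ¬ ContainsBraid w'

/-- The strictly decreasing word whose letters are the given finite set. -/
def descWord (s : Finset ℕ) : List ℕ := (s.sort (· ≤ ·)).reverse

/-- The Hecke word `h^m ⋯ h^2 h^1` of a decreasing factorization into `m` factors,
where (0-indexed) `h j` is the factor `h^{j+1}`; each factor is read as a strictly
decreasing word. -/
def factorWord (m : ℕ) (h : ℕ → Finset ℕ) : List ℕ :=
  ((List.range m).reverse.map (fun j => descWord (h j))).flatten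

/-- Pairing process: the letters of the upper factor, given as a list (largest
first), successively pair with the smallest yet-unpaired letter `≥` them in the
lower factor `rest`; returns the set of unpaired letters of the lower factor. -/
def pairAux : List ℕ → Finset ℕ → Finset ℕ
  | [], rest => rest
  | x :: xs, rest =>
    if hc : (rest.filter (fun a => x ≤ a)).Nonempty then
      pairAux xs (rest.erase ((rest.filter (fun a => x ≤ a)).min' hc))
    else pairAux xs rest

/-- Unpaired letters of the lower factor `a = h^i` after pairing with the upper
factor `b = h^{i+1}`. -/
def unpairedLow (a b : Finset ℕ) : Finset ℕ := pairAux (descWord b) a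

/-- The crystal operator `f^⋆` on the pair of factors `(a, b) = (h^i, h^{i+1})`. -/
def fStarPair (a b : Finset ℕ) : Option (Finset ℕ × Finset ℕ) :=
  if hU : (unpairedLow a b).Nonempty then
    let x := (unpairedLow a b).max' hU
    if x + 1 ∈ a ∧ x + 1 ∈ b then some (a.erase (x+1), insert x b)
    else some (a.erase x, insert x b)
  else none

/-- The crystal operator `f_{i+1}^⋆` (0-indexed `i`), acting on the factors
`h i` and `h (i+1)` of a decreasing factorization. -/
def fStar (i : ℕ) (h : ℕ → Finset ℕ) : Option (ℕ → Finset ℕ) :=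
  match fStarPair (h i) (h (i+1)) with
  | none => none
  | some (a, b) => some (Function.update (Function.update h i a) (i+1) b)

/-- Pairing process, recording the unpaired letters of the upper factor. -/
def pairAuxHigh : List ℕ → Finset ℕ → Finset ℕ
  | [], _ => ∅
  | x :: xs, rest =>
    if hc : (rest.filter (fun a => x ≤ a)).Nonempty then
      pairAuxHigh xs (rest.erase ((rest.filter (fun a => x ≤ a)).min' hc))
    else insert x (pairAuxHigh xs rest)

/-- Unpaired letters of the upper factor `b = h^{i+1}` after pairing with the
lower factor `a = h^i`. -/
def unpairedHigh (a b : Finset ℕ) : Finset ℕ := pairAuxHigh (descWord b) a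

/-- The crystal operator `e^⋆` on the pair of factors `(a, b) = (h^i, h^{i+1})`. -/
def eStarPair (a b : Finset ℕ) : Option (Finset ℕ × Finset ℕ) :=
  if hU : (unpairedHigh a b).Nonempty then
    let y := (unpairedHigh a b).min' hU
    if 1 ≤ y ∧ y - 1 ∈ a ∧ y - 1 ∈ b then some (insert y a, b.erase (y-1))
    else some (insert y a, b.erase y)
  else none

/-- The crystal operator `e_{i+1}^⋆` (0-indexed `i`), acting on the factors
`h i` and `h (i+1)` of a decreasing factorization. -/
def eStar (i : ℕ) (h : ℕ → Finset ℕ) : Option (ℕ → Finset ℕ) :=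
  match eStarPair (h i) (h (i+1)) with
  | none => none
  | some (a, b) => some (Function.update (Function.update h i a) (i+1) b)

/-!
The pairing process is bracket matching. Hence an unpaired letter `x` of the lower factor `a`
outnumbers the upper factor `b` on every interval ending at it, `#(b ∩ [t, x]) < #(a ∩ [t, x])`,
and an unpaired letter `y` of `b` outnumbers `a` on every interval `[y, u]`; in particular every
unpaired letter of `a` lies below every unpaired letter of `b`.

Following the pairing through the change made by `f^⋆`, the smallest unpaired letter of the new
upper factor is `x` or `x + 1` (according to the branch taken), where `x` was the largest
unpaired letter of `a`, and `e^⋆` acting there restores `(a, b)`; symmetrically for `e^⋆` then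
`f^⋆`. This only fails if the second operator takes the other branch of its definition. That
branch needs a run of consecutive letters next to the moved one, and the interval counts force
the run to end where a single letter commutes through the word `b a` into a braid `m (m+1) m`
or `(m+1) m (m+1)`, which full commutativity excludes.
-/

open Finset

lemma pairwise_descWord (s : Finset ℕ) : (descWord s).Pairwise (· > ·) := by
  simpa [descWord, List.pairwise_reverse] using (sortedLT_sort s).pairwise

@[simp] lemma mem_descWord {s : Finset ℕ} {c : ℕ} : c ∈ descWord s ↔ c ∈ s := by
  simp [descWord]

lemma countP_descWord (s : Finset ℕ) (p : ℕ → Prop) [DecidablePred p] :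
    (descWord s).countP (fun c => decide (p c)) = #{c ∈ s | p c} := by
  rw [descWord, List.countP_reverse, ← Multiset.coe_countP, sort_eq,
    Multiset.countP_eq_card_filter]
  rfl

lemma descWord_eq_filter_append {s t u : Finset ℕ} {lo hi : ℕ} (mid : List ℕ)
    (hle : lo ≤ hi + 1) (hmid : mid.Pairwise (· > ·))
    (hbound : ∀ c ∈ mid, lo ≤ c ∧ c ≤ hi)
    (hu : ∀ c, c ∈ u ↔ (c ∈ s ∧ hi < c) ∨ c ∈ mid ∨ (c ∈ t ∧ c < lo)) :
    descWord u = descWord {c ∈ s | hi < c} ++ (mid ++ descWord {c ∈ t | c < lo}) := by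
  refine (pairwise_descWord u).eq_of_mem_iff ?_ (by simpa using hu)
  simp only [List.pairwise_append, pairwise_descWord, hmid, List.mem_append, mem_descWord,
    mem_filter, true_and]
  grind

/-- `p` is the letter of `s` that the pairing process assigns to the letter `β`. -/
def IsPartner (s : Finset ℕ) (β p : ℕ) : Prop :=
  p ∈ s ∧ β ≤ p ∧ ∀ c ∈ s, β ≤ c → p ≤ c

section Pairing

variable {l : List ℕ} {s : Finset ℕ}

lemma exists_isPartner_or_forall_lt (s : Finset ℕ) (β : ℕ) :
    (∃ p, IsPartner s β p) ∨ ∀ c ∈ s, c < β := by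
  by_cases hne : {c ∈ s | β ≤ c}.Nonempty
  · obtain ⟨hp, hle⟩ := mem_filter.1 (min'_mem _ hne)
    exact Or.inl ⟨_, hp, hle, fun c hc hβc => min'_le _ _ (mem_filter.2 ⟨hc, hβc⟩)⟩
  · exact Or.inr fun c hc => not_le.1 fun hβc => hne ⟨c, mem_filter.2 ⟨hc, hβc⟩⟩

lemma pairAux_cons_of_isPartner {β p : ℕ} (hp : IsPartner s β p) :
    pairAux (β :: l) s = pairAux l (s.erase p) ∧
      pairAuxHigh (β :: l) s = pairAuxHigh l (s.erase p) := by
  have hne : {c ∈ s | β ≤ c}.Nonempty := ⟨p, mem_filter.2 ⟨hp.1, hp.2.1⟩⟩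
  have hmin : {c ∈ s | β ≤ c}.min' hne = p :=
    (min'_eq_iff _ _ p).2 ⟨mem_filter.2 ⟨hp.1, hp.2.1⟩,
      fun c hc => hp.2.2 c (mem_filter.1 hc).1 (mem_filter.1 hc).2⟩
  simp only [pairAux, pairAuxHigh, dif_pos hne, hmin, and_self]

lemma pairAux_cons_of_forall_lt {β : ℕ} (h : ∀ c ∈ s, c < β) :
    pairAux (β :: l) s = pairAux l s ∧
      pairAuxHigh (β :: l) s = insert β (pairAuxHigh l s) := by
  have hne : ¬ {c ∈ s | β ≤ c}.Nonempty := fun ⟨c, hc⟩ =>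
    (mem_filter.1 hc).2.not_gt (h c (mem_filter.1 hc).1)
  simp only [pairAux, pairAuxHigh, dif_neg hne, and_self]

lemma pairAux_subset (l : List ℕ) (s : Finset ℕ) : pairAux l s ⊆ s := by
  induction l generalizing s with
  | nil => exact subset_rfl
  | cons β l ih =>
    rcases exists_isPartner_or_forall_lt s β with ⟨p, hp⟩ | hlt
    · rw [(pairAux_cons_of_isPartner hp).1]
      exact (ih _).trans (erase_subset _ _)
    · rw [(pairAux_cons_of_forall_lt hlt).1]
      exact ih s

lemma mem_of_mem_pairAuxHigh {y : ℕ} (hy : y ∈ pairAuxHigh l s) : y ∈ l := by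
  induction l generalizing s with
  | nil => simp [pairAuxHigh] at hy
  | cons β l ih =>
    rcases exists_isPartner_or_forall_lt s β with ⟨p, hp⟩ | hlt
    · rw [(pairAux_cons_of_isPartner hp).2] at hy
      exact List.mem_cons_of_mem _ (ih hy)
    · rw [(pairAux_cons_of_forall_lt hlt).2, mem_insert] at hy
      rcases hy with rfl | hy
      · exact List.mem_cons_self
      · exact List.mem_cons_of_mem _ (ih hy)

lemma pairAux_append (l l' : List ℕ) (s : Finset ℕ) :
    pairAux (l ++ l') s = pairAux l' (pairAux l s) := by
  induction l generalizing s with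
  | nil => rfl
  | cons β l ih =>
    rcases exists_isPartner_or_forall_lt s β with ⟨p, hp⟩ | hlt
    · rw [List.cons_append, (pairAux_cons_of_isPartner hp).1, (pairAux_cons_of_isPartner hp).1,
        ih]
    · rw [List.cons_append, (pairAux_cons_of_forall_lt hlt).1, (pairAux_cons_of_forall_lt hlt).1,
        ih]

lemma pairAuxHigh_append (l l' : List ℕ) (s : Finset ℕ) :
    pairAuxHigh (l ++ l') s = pairAuxHigh l s ∪ pairAuxHigh l' (pairAux l s) := by
  induction l generalizing s with
  | nil => simp [pairAux, pairAuxHigh]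
  | cons β l ih =>
    rcases exists_isPartner_or_forall_lt s β with ⟨p, hp⟩ | hlt
    · rw [List.cons_append, (pairAux_cons_of_isPartner hp).2, (pairAux_cons_of_isPartner hp).2,
        (pairAux_cons_of_isPartner hp).1, ih]
    · rw [List.cons_append, (pairAux_cons_of_forall_lt hlt).2, (pairAux_cons_of_forall_lt hlt).2,
        (pairAux_cons_of_forall_lt hlt).1, ih, insert_union]

lemma mem_pairAux_of_forall_lt {y : ℕ} (hy : y ∈ s) (hl : ∀ β ∈ l, y < β) :
    y ∈ pairAux l s := by
  induction l generalizing s with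
  | nil => exact hy
  | cons β l ih =>
    have hl' : ∀ β ∈ l, y < β := fun β' h => hl β' (List.mem_cons_of_mem _ h)
    rcases exists_isPartner_or_forall_lt s β with ⟨p, hp⟩ | hlt
    · have hyp : y ≠ p := by have := hl β List.mem_cons_self; have := hp.2.1; omega
      rw [(pairAux_cons_of_isPartner hp).1]
      exact ih (mem_erase.2 ⟨hyp, hy⟩) hl'
    · rw [(pairAux_cons_of_forall_lt hlt).1]
      exact ih hy hl'

lemma mem_pairAux_of_mem_of_lt {x c : ℕ} (hl : ∀ β ∈ l, β ≤ x) (hx : x ∈ pairAux l s)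
    (hc : c ∈ s) (hxc : x < c) : c ∈ pairAux l s := by
  induction l generalizing s with
  | nil => exact hc
  | cons β l ih =>
    have hl' : ∀ β ∈ l, β ≤ x := fun β' h => hl β' (List.mem_cons_of_mem _ h)
    rcases exists_isPartner_or_forall_lt s β with ⟨p, hp⟩ | hlt
    · rw [(pairAux_cons_of_isPartner hp).1] at hx ⊢
      have hpx : p ≤ x :=
        hp.2.2 x (mem_of_mem_erase (pairAux_subset _ _ hx)) (hl β List.mem_cons_self)
      exact ih hl' hx (mem_erase.2 ⟨by omega, hc⟩)
    · rw [(pairAux_cons_of_forall_lt hlt).1] at hx ⊢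
      exact ih hl' hx hc

lemma pairAux_erase_of_mem_pairAux {x : ℕ} (hx : x ∈ pairAux l s) :
    pairAux l (s.erase x) = (pairAux l s).erase x ∧
      pairAuxHigh l (s.erase x) = pairAuxHigh l s := by
  induction l generalizing s with
  | nil => exact ⟨rfl, rfl⟩
  | cons β l ih =>
    rcases exists_isPartner_or_forall_lt s β with ⟨p, hp⟩ | hlt
    · rw [(pairAux_cons_of_isPartner hp).1] at hx ⊢
      have hxp : x ≠ p := by rintro rfl; exact notMem_erase x s (pairAux_subset _ _ hx)
      have hp' : IsPartner (s.erase x) β p :=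
        ⟨mem_erase.2 ⟨hxp.symm, hp.1⟩, hp.2.1, fun c hc => hp.2.2 c (mem_of_mem_erase hc)⟩
      rw [(pairAux_cons_of_isPartner hp').1, (pairAux_cons_of_isPartner hp').2,
        (pairAux_cons_of_isPartner hp).2, erase_right_comm]
      exact ih hx
    · have hlt' : ∀ c ∈ s.erase x, c < β := fun c hc => hlt c (mem_of_mem_erase hc)
      rw [(pairAux_cons_of_forall_lt hlt).1] at hx
      rw [(pairAux_cons_of_forall_lt hlt).1, (pairAux_cons_of_forall_lt hlt).2,
        (pairAux_cons_of_forall_lt hlt').1, (pairAux_cons_of_forall_lt hlt').2, (ih hx).2]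
      exact ⟨(ih hx).1, rfl⟩

lemma pairAux_insert_of_forall_lt_of_notMem {y : ℕ} (hl : ∀ β ∈ l, y < β) (hy : y ∉ s) :
    pairAux l (insert y s) = insert y (pairAux l s) ∧
      pairAuxHigh l (insert y s) = pairAuxHigh l s := by
  have hmem := mem_pairAux_of_forall_lt (mem_insert_self y s) hl
  have := pairAux_erase_of_mem_pairAux hmem
  rw [erase_insert hy] at this
  exact ⟨by rw [this.1, insert_erase hmem], this.2.symm⟩

lemma mem_pairAux_insert_of_pairAuxHigh_eq_empty {y : ℕ} (hs : ∀ c ∈ s, c < y)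
    (hH : pairAuxHigh l s = ∅) : y ∈ pairAux l (insert y s) := by
  induction l generalizing s with
  | nil => exact mem_insert_self y s
  | cons β l ih =>
    rcases exists_isPartner_or_forall_lt s β with ⟨p, hp⟩ | hlt
    · have hpy : p < y := hs p hp.1
      have hp' : IsPartner (insert y s) β p := ⟨mem_insert_of_mem hp.1, hp.2.1,
        fun c hc hβc => (mem_insert.1 hc).elim (fun h => h ▸ hpy.le) (hp.2.2 c · hβc)⟩
      rw [(pairAux_cons_of_isPartner hp).2] at hH
      rw [(pairAux_cons_of_isPartner hp').1, erase_insert_of_ne hpy.ne']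
      exact ih (fun c hc => hs c (mem_of_mem_erase hc)) hH
    · rw [(pairAux_cons_of_forall_lt hlt).2] at hH
      exact absurd hH (insert_ne_empty _ _)

lemma pairAux_insert_of_pairAuxHigh_eq_empty {y : ℕ} (hs : ∀ c ∈ s, c < y)
    (hH : pairAuxHigh l s = ∅) : pairAux l (insert y s) = insert y (pairAux l s) := by
  have hmem := mem_pairAux_insert_of_pairAuxHigh_eq_empty hs hH
  have hy : y ∉ s := fun h => (hs y h).false
  have h := (pairAux_erase_of_mem_pairAux hmem).1
  rw [erase_insert hy] at h
  rw [h, insert_erase hmem]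

lemma countP_lt_card_of_mem_pairAux {x t : ℕ} (hx : x ∈ pairAux l s) (ht : t ≤ x) :
    l.countP (· ∈ Icc t x) < #(s ∩ Icc t x) := by
  induction l generalizing s with
  | nil => exact card_pos.2 ⟨x, mem_inter.2 ⟨hx, mem_Icc.2 ⟨ht, le_rfl⟩⟩⟩
  | cons β l ih =>
    rcases exists_isPartner_or_forall_lt s β with ⟨p, hp⟩ | hlt
    · rw [(pairAux_cons_of_isPartner hp).1] at hx
      have hxs := mem_erase.1 (pairAux_subset _ _ hx)
      have hcount := ih hx
      rw [erase_inter] at hcount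
      by_cases hβ : β ∈ Icc t x
      · have hpI : p ∈ s ∩ Icc t x := mem_inter.2 ⟨hp.1, mem_Icc.2
          ⟨(mem_Icc.1 hβ).1.trans hp.2.1, hp.2.2 x hxs.2 (mem_Icc.1 hβ).2⟩⟩
        rw [card_erase_of_mem hpI] at hcount
        rw [List.countP_cons_of_pos (by simpa using hβ)]
        have := card_pos.2 ⟨p, hpI⟩
        omega
      · rw [List.countP_cons_of_neg (by simpa using hβ)]
        exact hcount.trans_le (card_le_card (erase_subset _ _))
    · rw [(pairAux_cons_of_forall_lt hlt).1] at hx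
      have hβ : β ∉ Icc t x := fun h => (hlt x (pairAux_subset _ _ hx)).not_ge (mem_Icc.1 h).2
      rw [List.countP_cons_of_neg (by simpa using hβ)]
      exact ih hx

lemma card_lt_countP_of_mem_pairAuxHigh {y u : ℕ} (hl : l.Pairwise (· > ·))
    (hy : y ∈ pairAuxHigh l s) (hu : y ≤ u) :
    #(s ∩ Icc y u) < l.countP (· ∈ Icc y u) := by
  induction l generalizing s with
  | nil => simp [pairAuxHigh] at hy
  | cons β l ih =>
    obtain ⟨hβl, hl⟩ := List.pairwise_cons.1 hl
    rcases exists_isPartner_or_forall_lt s β with ⟨p, hp⟩ | hlt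
    · rw [(pairAux_cons_of_isPartner hp).2] at hy
      have hyβ : y < β := hβl y (mem_of_mem_pairAuxHigh hy)
      have hcount := ih hl hy
      rw [erase_inter] at hcount
      by_cases hβ : β ≤ u
      · have := pred_card_le_card_erase (s := s ∩ Icc y u) (a := p)
        rw [List.countP_cons_of_pos (by simp [hyβ.le, hβ])]
        omega
      · have hpI : p ∉ s ∩ Icc y u := fun h =>
          hβ (hp.2.1.trans (mem_Icc.1 (mem_inter.1 h).2).2)
        rw [erase_eq_of_notMem hpI] at hcount
        rw [List.countP_cons_of_neg (by simp [hβ])]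
        exact hcount
    · rw [(pairAux_cons_of_forall_lt hlt).2, mem_insert] at hy
      rcases hy with rfl | hy
      · have hempty : s ∩ Icc y u = ∅ := eq_empty_of_forall_notMem fun c hc =>
          (hlt c (mem_inter.1 hc).1).not_ge (mem_Icc.1 (mem_inter.1 hc).2).1
        rw [hempty, List.countP_cons_of_pos (by simp [hu])]
        exact Nat.succ_pos _
      · rw [List.countP_cons]
        exact (ih hl hy).trans_le (Nat.le_add_right _ _)

lemma lt_of_isGreatest_pairAux {x c : ℕ} (hl : ∀ β ∈ l, β ≤ x)
    (hx : IsGreatest (pairAux l s : Set ℕ) x) (hc : c ∈ s) (hcx : c ≠ x) : c < x := by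
  by_contra! hxc
  exact hcx (le_antisymm (hx.2 (mem_pairAux_of_mem_of_lt hl hx.1 hc (hxc.lt_of_ne' hcx))) hxc)

lemma forall_lt_of_mem_pairAuxHigh_append_cons {L R : List ℕ} {y : ℕ}
    (hL : ∀ β ∈ L, y < β) (hR : ∀ β ∈ R, β < y)
    (hy : y ∈ pairAuxHigh (L ++ y :: R) s) :
    ∀ c ∈ pairAux L s, c < y := by
  rw [pairAuxHigh_append, mem_union] at hy
  rcases exists_isPartner_or_forall_lt (pairAux L s) y with ⟨p, hp⟩ | hlt
  · rw [(pairAux_cons_of_isPartner hp).2] at hy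
    rcases hy with hy | hy
    · exact absurd (hL y (mem_of_mem_pairAuxHigh hy)) (lt_irrefl y)
    · exact absurd (hR y (mem_of_mem_pairAuxHigh hy)) (lt_irrefl y)
  · exact hlt

end Pairing

section Unpaired

variable {a b : Finset ℕ}

lemma mem_of_mem_unpairedLow {x : ℕ} (hx : x ∈ unpairedLow a b) : x ∈ a :=
  pairAux_subset _ _ hx

lemma mem_of_mem_unpairedHigh {y : ℕ} (hy : y ∈ unpairedHigh a b) : y ∈ b :=
  mem_descWord.1 (mem_of_mem_pairAuxHigh hy)

lemma card_lt_card_of_mem_unpairedLow {x t : ℕ} (hx : x ∈ unpairedLow a b) (ht : t ≤ x) :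
    #(b ∩ Icc t x) < #(a ∩ Icc t x) := by
  have := countP_lt_card_of_mem_pairAux hx ht
  rwa [countP_descWord, filter_mem_eq_inter] at this

lemma card_lt_card_of_mem_unpairedHigh {y u : ℕ} (hy : y ∈ unpairedHigh a b) (hu : y ≤ u) :
    #(a ∩ Icc y u) < #(b ∩ Icc y u) := by
  have := card_lt_countP_of_mem_pairAuxHigh (pairwise_descWord b) hy hu
  rwa [countP_descWord, filter_mem_eq_inter] at this

lemma card_inter_Icc_self_le_one (s : Finset ℕ) (x : ℕ) : #(s ∩ Icc x x) ≤ 1 :=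
  (card_le_card inter_subset_right).trans (by simp)

lemma notMem_of_mem_unpairedLow {x : ℕ} (hx : x ∈ unpairedLow a b) : x ∉ b := by
  intro hxb
  have := card_lt_card_of_mem_unpairedLow hx le_rfl
  have : #(b ∩ Icc x x) = 1 := by simp [hxb]
  have := card_inter_Icc_self_le_one a x
  omega

lemma notMem_of_mem_unpairedHigh {y : ℕ} (hy : y ∈ unpairedHigh a b) : y ∉ a := by
  intro hya
  have := card_lt_card_of_mem_unpairedHigh hy le_rfl
  have : #(a ∩ Icc y y) = 1 := by simp [hya]
  have := card_inter_Icc_self_le_one b y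
  omega

lemma lt_of_mem_unpairedLow_of_mem_unpairedHigh {x y : ℕ} (hx : x ∈ unpairedLow a b)
    (hy : y ∈ unpairedHigh a b) : x < y := by
  by_contra! hyx
  exact (card_lt_card_of_mem_unpairedLow hx hyx).not_gt (card_lt_card_of_mem_unpairedHigh hy hyx)

end Unpaired

section Moves

variable {a b : Finset ℕ}

lemma unpairedHigh_erase_insert {x : ℕ} (hx : IsGreatest (unpairedLow a b : Set ℕ) x) :
    unpairedHigh (a.erase x) (insert x b) = insert x (unpairedHigh a b) := by
  have hxb := notMem_of_mem_unpairedLow hx.1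
  set L := descWord {c ∈ b | x < c}
  set R := descWord {c ∈ b | c < x}
  have hb : descWord b = L ++ R :=
    descWord_eq_filter_append [] (by omega) (by simp) (by simp) (by grind)
  have hb' : descWord (insert x b) = L ++ x :: R :=
    descWord_eq_filter_append [x] (by omega) (by simp) (by simp) (by grind)
  have hR : ∀ β ∈ R, β ≤ x := by simp +contextual [R, le_of_lt]
  have hU : unpairedLow a b = pairAux R (pairAux L a) := by rw [unpairedLow, hb, pairAux_append]
  rw [hU] at hx
  have hxr : x ∈ pairAux L a := pairAux_subset _ _ hx.1
  have hlt : ∀ c ∈ (pairAux L a).erase x, c < x := fun c hc =>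
    lt_of_isGreatest_pairAux hR hx (mem_of_mem_erase hc) (ne_of_mem_erase hc)
  calc unpairedHigh (a.erase x) (insert x b)
      = pairAuxHigh L a ∪ pairAuxHigh (x :: R) ((pairAux L a).erase x) := by
        rw [unpairedHigh, hb', pairAuxHigh_append, (pairAux_erase_of_mem_pairAux hxr).1,
          (pairAux_erase_of_mem_pairAux hxr).2]
    _ = pairAuxHigh L a ∪ insert x (pairAuxHigh R (pairAux L a)) := by
        rw [(pairAux_cons_of_forall_lt hlt).2, (pairAux_erase_of_mem_pairAux hx.1).2]
    _ = insert x (unpairedHigh a b) := by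
        rw [unpairedHigh, hb, pairAuxHigh_append, union_insert]

lemma unpairedHigh_erase_succ_insert {x : ℕ} (hx : IsGreatest (unpairedLow a b : Set ℕ) x)
    (ha : x + 1 ∈ a) (hb : x + 1 ∈ b) :
    unpairedHigh (a.erase (x + 1)) (insert x b) = insert (x + 1) (unpairedHigh a b) := by
  have hxb := notMem_of_mem_unpairedLow hx.1
  set L := descWord {c ∈ b | x + 1 < c}
  set R := descWord {c ∈ b | c < x}
  have hb : descWord b = L ++ (x + 1) :: R :=
    descWord_eq_filter_append [x + 1] (by omega) (by simp) (by simp) (by grind)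
  have hb' : descWord (insert x b) = L ++ (x + 1) :: x :: R :=
    descWord_eq_filter_append [x + 1, x] (by omega) (by simp) (by simp) (by grind)
  have hL : ∀ β ∈ L, x + 1 < β := by simp [L]
  have hR : ∀ β ∈ R, β ≤ x := by simp +contextual [R, le_of_lt]
  set r := pairAux L a
  have hx1r : x + 1 ∈ r := mem_pairAux_of_forall_lt ha hL
  have hpart : IsPartner r (x + 1) (x + 1) := ⟨hx1r, le_rfl, fun _ _ h => h⟩
  have hU : unpairedLow a b = pairAux R (r.erase (x + 1)) := by
    rw [unpairedLow, hb, pairAux_append, (pairAux_cons_of_isPartner hpart).1]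
  rw [hU] at hx
  have hxr : x ∈ r.erase (x + 1) := pairAux_subset _ _ hx.1
  have hlt : ∀ c ∈ r.erase (x + 1), c < x + 1 := fun c hc => (eq_or_ne c x).elim
    (fun h => h ▸ lt_add_one x)
    fun hcx => (lt_of_isGreatest_pairAux hR hx hc hcx).trans_le x.le_succ
  have hpart' : IsPartner (r.erase (x + 1)) x x := ⟨hxr, le_rfl, fun _ _ h => h⟩
  calc unpairedHigh (a.erase (x + 1)) (insert x b)
      = pairAuxHigh L a ∪ pairAuxHigh ((x + 1) :: x :: R) (r.erase (x + 1)) := by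
        rw [unpairedHigh, hb', pairAuxHigh_append, (pairAux_erase_of_mem_pairAux hx1r).1,
          (pairAux_erase_of_mem_pairAux hx1r).2]
    _ = pairAuxHigh L a ∪ insert (x + 1) (pairAuxHigh R (r.erase (x + 1))) := by
        rw [(pairAux_cons_of_forall_lt hlt).2, (pairAux_cons_of_isPartner hpart').2,
          (pairAux_erase_of_mem_pairAux hx.1).2]
    _ = insert (x + 1) (unpairedHigh a b) := by
        rw [unpairedHigh, hb, pairAuxHigh_append, (pairAux_cons_of_isPartner hpart).2, union_insert]

lemma unpairedLow_insert_erase {y : ℕ} (hy : IsLeast (unpairedHigh a b : Set ℕ) y) :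
    unpairedLow (insert y a) (b.erase y) = insert y (unpairedLow a b) := by
  have hyb := mem_of_mem_unpairedHigh hy.1
  have hya := notMem_of_mem_unpairedHigh hy.1
  set L := descWord {c ∈ b | y < c}
  set R := descWord {c ∈ b | c < y}
  have hb : descWord b = L ++ y :: R :=
    descWord_eq_filter_append [y] (by omega) (by simp) (by simp) (by grind)
  have hb' : descWord (b.erase y) = L ++ R :=
    descWord_eq_filter_append [] (by omega) (by simp) (by simp) (by grind)
  have hL : ∀ β ∈ L, y < β := by simp [L]
  have hR : ∀ β ∈ R, β < y := by simp [R]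
  set r := pairAux L a
  have hy' : y ∈ pairAuxHigh (L ++ y :: R) a := by rw [← hb]; exact hy.1
  have hlt := forall_lt_of_mem_pairAuxHigh_append_cons hL hR hy'
  have hH : pairAuxHigh R r = ∅ := eq_empty_of_forall_notMem fun u hu => by
    have hu' : u ∈ unpairedHigh a b := by
      rw [unpairedHigh, hb, pairAuxHigh_append, (pairAux_cons_of_forall_lt hlt).2]
      exact mem_union_right _ (mem_insert_of_mem hu)
    exact (hR u (mem_of_mem_pairAuxHigh hu)).not_ge (hy.2 hu')
  calc unpairedLow (insert y a) (b.erase y)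
      = pairAux R (insert y r) := by
        rw [unpairedLow, hb', pairAux_append, (pairAux_insert_of_forall_lt_of_notMem hL hya).1]
    _ = insert y (pairAux R r) := pairAux_insert_of_pairAuxHigh_eq_empty hlt hH
    _ = insert y (unpairedLow a b) := by
        rw [unpairedLow, hb, pairAux_append, (pairAux_cons_of_forall_lt hlt).1]

lemma unpairedLow_insert_succ_erase {y : ℕ} (hy : IsLeast (unpairedHigh a b : Set ℕ) (y + 1))
    (ha : y ∈ a) (hb : y ∈ b) :
    unpairedLow (insert (y + 1) a) (b.erase y) = insert y (unpairedLow a b) := by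
  have hyb := mem_of_mem_unpairedHigh hy.1
  have hya := notMem_of_mem_unpairedHigh hy.1
  set L := descWord {c ∈ b | y + 1 < c}
  set R := descWord {c ∈ b | c < y}
  have hb : descWord b = L ++ (y + 1) :: y :: R :=
    descWord_eq_filter_append [y + 1, y] (by omega) (by simp) (by simp) (by grind)
  have hb' : descWord (b.erase y) = L ++ (y + 1) :: R :=
    descWord_eq_filter_append [y + 1] (by omega) (by simp) (by simp) (by grind)
  have hL : ∀ β ∈ L, y + 1 < β := by simp [L]
  have hR : ∀ β ∈ R, β < y := by simp [R]
  set r := pairAux L a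
  have hy' : y + 1 ∈ pairAuxHigh (L ++ (y + 1) :: y :: R) a := by rw [← hb]; exact hy.1
  have hlt := forall_lt_of_mem_pairAuxHigh_append_cons hL
    (by simp +contextual [R, le_of_lt]) hy'
  have hyr : y ∈ r := mem_pairAux_of_forall_lt ha fun β hβ => (hL β hβ).trans' (by omega)
  have hpart : IsPartner r y y := ⟨hyr, le_rfl, fun _ _ h => h⟩
  have hlt' : ∀ c ∈ r.erase y, c < y := fun c hc => by
    have := hlt c (mem_of_mem_erase hc); have := ne_of_mem_erase hc; omega
  have hH : pairAuxHigh R (r.erase y) = ∅ := eq_empty_of_forall_notMem fun u hu => by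
    have hu' : u ∈ unpairedHigh a b := by
      rw [unpairedHigh, hb, pairAuxHigh_append, (pairAux_cons_of_forall_lt hlt).2,
        (pairAux_cons_of_isPartner hpart).2]
      exact mem_union_right _ (mem_insert_of_mem hu)
    have := hR u (mem_of_mem_pairAuxHigh hu); have := hy.2 hu'; omega
  have hpart' : IsPartner (insert (y + 1) r) (y + 1) (y + 1) :=
    ⟨mem_insert_self _ _, le_rfl, fun _ _ h => h⟩
  have hyr' : y + 1 ∉ r := fun h => (hlt _ h).false
  calc unpairedLow (insert (y + 1) a) (b.erase y)
      = pairAux R r := by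
        rw [unpairedLow, hb', pairAux_append, (pairAux_insert_of_forall_lt_of_notMem hL hya).1,
          (pairAux_cons_of_isPartner hpart').1, erase_insert hyr']
    _ = insert y (pairAux R (r.erase y)) := by
        rw [← pairAux_insert_of_pairAuxHigh_eq_empty hlt' hH, insert_erase hyr]
    _ = insert y (unpairedLow a b) := by
        rw [unpairedLow, hb, pairAux_append, (pairAux_cons_of_forall_lt hlt).1,
          (pairAux_cons_of_isPartner hpart).1]

end Moves

/-- The letter `m` of `b` can commute rightwards past the letters between it and `m + 1` in the
word `descWord b ++ descWord a`, producing the braid `m (m+1) m`. -/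
def BraidLow (a b : Finset ℕ) : Prop :=
  ∃ m, m ∈ a ∧ m + 1 ∈ a ∧ m ∈ b ∧ ∀ c ∈ b, c + 1 ≠ m

/-- The letter `m + 1` of `a` can commute leftwards past the letters between it and `m` in the
word `descWord b ++ descWord a`, producing the braid `(m+1) m (m+1)`. -/
def BraidHigh (a b : Finset ℕ) : Prop :=
  ∃ m, m ∈ b ∧ m + 1 ∈ b ∧ m + 1 ∈ a ∧ m + 2 ∉ a

section Braids

variable {a b : Finset ℕ}

lemma braidLow_of_mem_unpairedLow {x : ℕ} (hx : x + 1 ∈ unpairedLow a b) (ha : x ∈ a)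
    (hb : x ∈ b) : BraidLow a b := by
  have hx1a := mem_of_mem_unpairedLow hx
  have hx1b := notMem_of_mem_unpairedLow hx
  have hex : ∃ m, ∀ c, m ≤ c → c ≤ x → c ∈ a ∧ c ∈ b :=
    ⟨x, fun c h1 h2 => le_antisymm h2 h1 ▸ ⟨ha, hb⟩⟩
  -- Take the longest run `[m, x] ⊆ a ∩ b`. Were it continued in `b` by `c = m - 1`, then `b`
  -- would have as many letters as `a` in `[c, x + 1]`, and `x + 1` would be paired.
  set m := Nat.find hex
  have hrun : ∀ c, m ≤ c → c ≤ x → c ∈ a ∧ c ∈ b := Nat.find_spec hex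
  have hmx : m ≤ x := Nat.find_min' hex fun c h1 h2 => le_antisymm h2 h1 ▸ ⟨ha, hb⟩
  refine ⟨m, (hrun m le_rfl hmx).1, ?_, (hrun m le_rfl hmx).2, fun c hc hcm => ?_⟩
  · rcases hmx.lt_or_eq with h | h
    · exact (hrun (m + 1) (by omega) h).1
    · exact h ▸ hx1a
  have hca : c ∉ a := fun hca => Nat.find_min hex (show c < m by omega) fun d h1 h2 =>
    (eq_or_lt_of_le h1).elim (fun h => h ▸ ⟨hca, hc⟩) fun h => hrun d (by omega) h2
  have hcount := card_lt_card_of_mem_unpairedLow hx (show c ≤ x + 1 by omega)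
  have h1 : a ∩ Icc c (x + 1) ⊆ Icc m (x + 1) := fun d hd => by
    obtain ⟨hda, hd⟩ := mem_inter.1 hd
    have : d ≠ c := fun h => hca (h ▸ hda)
    simp only [mem_Icc] at hd ⊢; omega
  have h2 : Icc c x ⊆ b ∩ Icc c (x + 1) := fun d hd => by
    simp only [mem_Icc] at hd
    refine mem_inter.2 ⟨?_, mem_Icc.2 ⟨hd.1, by omega⟩⟩
    rcases eq_or_lt_of_le hd.1 with h | h
    · exact h ▸ hc
    · exact (hrun d (by omega) hd.2).2
  have := card_le_card h1
  have := card_le_card h2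
  simp only [Nat.card_Icc] at *
  omega

lemma braidHigh_of_mem_unpairedHigh {y : ℕ} (hy : y ∈ unpairedHigh a b) (ha : y + 1 ∈ a)
    (hb : y + 1 ∈ b) : BraidHigh a b := by
  have hex : ∃ m, y ≤ m ∧ ¬ (m + 2 ∈ a ∧ m + 2 ∈ b) := by
    obtain ⟨k, hk⟩ := Infinite.exists_notMem_finset (a ∪ range (y + 2))
    simp only [mem_union, mem_range, not_or, not_lt] at hk
    exact ⟨k - 2, by omega, fun h => hk.1 (by rw [show k = k - 2 + 2 by omega]; exact h.1)⟩
  -- Take the longest run `[y + 1, m + 1] ⊆ a ∩ b`. Were it continued in `a` by `m + 2`, then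
  -- `a` would have as many letters as `b` in `[y, m + 2]`, and `y` would be paired.
  set m := Nat.find hex
  obtain ⟨hym, hm⟩ : y ≤ m ∧ ¬ (m + 2 ∈ a ∧ m + 2 ∈ b) := Nat.find_spec hex
  have hrun : ∀ c, y < c → c ≤ m + 1 → c ∈ a ∧ c ∈ b := fun c h1 h2 => by
    rcases eq_or_lt_of_le (Nat.succ_le_of_lt h1) with h | h
    · exact h ▸ ⟨ha, hb⟩
    · by_contra hc
      exact Nat.find_min hex (show c - 2 < m by omega)
        ⟨by omega, by rwa [show c - 2 + 2 = c by omega]⟩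
  by_cases hm2 : m + 2 ∈ a
  · exfalso
    have hcount := card_lt_card_of_mem_unpairedHigh hy (show y ≤ m + 2 by omega)
    have h1 : Icc (y + 1) (m + 2) ⊆ a ∩ Icc y (m + 2) := fun d hd => by
      simp only [mem_Icc] at hd
      refine mem_inter.2 ⟨?_, mem_Icc.2 ⟨by omega, hd.2⟩⟩
      rcases eq_or_lt_of_le hd.2 with h | h
      · exact h ▸ hm2
      · exact (hrun d (by omega) (by omega)).1
    have h2 : b ∩ Icc y (m + 2) ⊆ Icc y (m + 1) := fun d hd => by
      obtain ⟨hdb, hd⟩ := mem_inter.1 hd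
      have : d ≠ m + 2 := fun h => hm ⟨hm2, h ▸ hdb⟩
      simp only [mem_Icc] at hd ⊢; omega
    have := card_le_card h1
    have := card_le_card h2
    simp only [Nat.card_Icc] at *
    omega
  · refine ⟨m, ?_, (hrun (m + 1) (by omega) le_rfl).2, (hrun (m + 1) (by omega) le_rfl).1, hm2⟩
    rcases eq_or_lt_of_le hym with h | h
    · exact h ▸ mem_of_mem_unpairedHigh hy
    · exact (hrun m h (by omega)).2

lemma heckeEquiv_append_append {w w' : List ℕ} (h : HeckeEquiv w w') (u v : List ℕ) :
    HeckeEquiv (u ++ w ++ v) (u ++ w' ++ v) := by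
  induction h with
  | rel _ _ hs =>
    refine Relation.EqvGen.rel _ _ ?_
    cases hs with
    | comm u₁ v₁ p q hpq => simpa using HeckeStep.comm (u ++ u₁) (v₁ ++ v) p q hpq
    | braid u₁ v₁ p q => simpa using HeckeStep.braid (u ++ u₁) (v₁ ++ v) p q
    | idem u₁ v₁ p => simpa using HeckeStep.idem (u ++ u₁) (v₁ ++ v) p
  | refl => exact Relation.EqvGen.refl _
  | symm _ _ _ ih => exact ih.symm
  | trans _ _ _ _ _ ih₁ ih₂ => exact ih₁.trans _ _ _ ih₂

lemma FullyCommutative.of_infix {v w : List ℕ} (hw : FullyCommutative w) (h : v <:+: w) :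
    FullyCommutative v := by
  obtain ⟨u, u', rfl⟩ := h
  rintro v' hv' ⟨u₁, v₁, i, hbr⟩
  refine hw (u ++ v' ++ u') (heckeEquiv_append_append hv' u u') ⟨u ++ u₁, v₁ ++ u', i, ?_⟩
  rcases hbr with rfl | rfl <;> simp

lemma heckeEquiv_cons_append {x : ℕ} {L : List ℕ} (hL : ∀ c ∈ L, c + 1 < x ∨ x + 1 < c)
    (u v : List ℕ) : HeckeEquiv (u ++ x :: (L ++ v)) (u ++ (L ++ x :: v)) := by
  induction L generalizing u with
  | nil => exact Relation.EqvGen.refl _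
  | cons c L ih =>
    refine Relation.EqvGen.trans _ (u ++ c :: x :: (L ++ v)) _ (Relation.EqvGen.rel _ _ ?_) ?_
    · exact HeckeStep.comm u (L ++ v) x c ((hL c List.mem_cons_self).symm)
    · simpa [HeckeEquiv] using ih (fun d hd => hL d (List.mem_cons_of_mem _ hd)) (u ++ [c])

lemma not_fullyCommutative_of_braidLow (h : BraidLow a b) :
    ¬ FullyCommutative (descWord b ++ descWord a) := by
  obtain ⟨m, hma, hm1a, hmb, hb⟩ := h
  set B₁ := descWord {c ∈ b | m < c}
  set B₂ := descWord {c ∈ b | c < m}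
  set A₁ := descWord {c ∈ a | m + 1 < c}
  set A₂ := descWord {c ∈ a | c < m}
  have hsb : descWord b = B₁ ++ m :: B₂ :=
    descWord_eq_filter_append [m] (by omega) (by simp) (by simp) (by grind)
  have hsa : descWord a = A₁ ++ (m + 1) :: m :: A₂ :=
    descWord_eq_filter_append [m + 1, m] (by omega) (by simp) (by simp) (by grind)
  have hcomm : ∀ c ∈ B₂ ++ A₁, c + 1 < m ∨ m + 1 < c := by
    simp only [B₂, A₁, List.mem_append, mem_descWord, mem_filter]
    grind
  intro hfc
  refine hfc _ ?_ ⟨B₁ ++ (B₂ ++ A₁), A₂, m, Or.inl rfl⟩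
  have := heckeEquiv_cons_append hcomm B₁ ((m + 1) :: m :: A₂)
  simpa [HeckeEquiv, hsa, hsb] using this

lemma not_fullyCommutative_of_braidHigh (h : BraidHigh a b) :
    ¬ FullyCommutative (descWord b ++ descWord a) := by
  obtain ⟨m, hmb, hm1b, hm1a, hm2a⟩ := h
  set B₁ := descWord {c ∈ b | m + 1 < c}
  set B₂ := descWord {c ∈ b | c < m}
  set A₁ := descWord {c ∈ a | m + 1 < c}
  set A₂ := descWord {c ∈ a | c < m + 1}
  have hsb : descWord b = B₁ ++ (m + 1) :: m :: B₂ :=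
    descWord_eq_filter_append [m + 1, m] (by omega) (by simp) (by simp) (by grind)
  have hsa : descWord a = A₁ ++ (m + 1) :: A₂ :=
    descWord_eq_filter_append [m + 1] (by omega) (by simp) (by simp) (by grind)
  have hcomm : ∀ c ∈ B₂ ++ A₁, c + 1 < m + 1 ∨ m + 1 + 1 < c := by
    simp only [B₂, A₁, List.mem_append, mem_descWord, mem_filter]
    grind
  intro hfc
  refine hfc _ (Relation.EqvGen.symm _ _ ?_) ⟨B₁, B₂ ++ A₁ ++ A₂, m, Or.inr rfl⟩
  have := heckeEquiv_cons_append hcomm (B₁ ++ [m + 1, m]) A₂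
  simpa [HeckeEquiv, hsa, hsb] using this

end Braids

section Operators

variable {a b : Finset ℕ}

lemma fStarPair_of_isGreatest {x : ℕ} (hx : IsGreatest (unpairedLow a b : Set ℕ) x) :
    fStarPair a b = some (if x + 1 ∈ a ∧ x + 1 ∈ b then (a.erase (x + 1), insert x b)
      else (a.erase x, insert x b)) := by
  have hne : (unpairedLow a b).Nonempty := ⟨x, hx.1⟩
  rw [fStarPair, dif_pos hne, (isGreatest_max' _ hne).unique hx]
  dsimp only
  split_ifs <;> rfl

lemma eStarPair_of_isLeast {y : ℕ} (hy : IsLeast (unpairedHigh a b : Set ℕ) y) :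
    eStarPair a b = some (if 1 ≤ y ∧ y - 1 ∈ a ∧ y - 1 ∈ b
      then (insert y a, b.erase (y - 1)) else (insert y a, b.erase y)) := by
  have hne : (unpairedHigh a b).Nonempty := ⟨y, hy.1⟩
  rw [eStarPair, dif_pos hne, (isLeast_min' _ hne).unique hy]
  dsimp only
  split_ifs <;> rfl

lemma exists_isGreatest_of_fStarPair_ne_none (h : fStarPair a b ≠ none) :
    ∃ x, IsGreatest (unpairedLow a b : Set ℕ) x := by
  by_contra! hx
  exact h (by rw [fStarPair, dif_neg fun hne => hx _ (isGreatest_max' _ hne)])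

lemma exists_isLeast_of_eStarPair_ne_none (h : eStarPair a b ≠ none) :
    ∃ y, IsLeast (unpairedHigh a b : Set ℕ) y := by
  by_contra! hy
  exact h (by rw [eStarPair, dif_neg fun hne => hy _ (isLeast_min' _ hne)])

lemma isLeast_insert_unpairedHigh {x y : ℕ} (hx : x ∈ unpairedLow a b) (hxy : y ≤ x + 1) :
    IsLeast (insert y (unpairedHigh a b) : Set ℕ) y :=
  ⟨Set.mem_insert _ _, fun _ hu => (Set.mem_insert_iff.1 hu).elim ge_of_eq
    fun hu => hxy.trans (lt_of_mem_unpairedLow_of_mem_unpairedHigh hx hu)⟩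

lemma isGreatest_insert_unpairedLow {x y : ℕ} (hy : y ∈ unpairedHigh a b) (hxy : y ≤ x + 1) :
    IsGreatest (insert x (unpairedLow a b) : Set ℕ) x :=
  ⟨Set.mem_insert _ _, fun _ hu => (Set.mem_insert_iff.1 hu).elim le_of_eq
    fun hu => Nat.le_of_lt_succ ((lt_of_mem_unpairedLow_of_mem_unpairedHigh hu hy).trans_le hxy)⟩

theorem eStarPair_fStarPair {p : Finset ℕ × Finset ℕ} (hbr : ¬ BraidLow a b)
    (h : fStarPair a b = some p) : eStarPair p.1 p.2 = some (a, b) := by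
  obtain ⟨x, hx⟩ := exists_isGreatest_of_fStarPair_ne_none (h ▸ Option.some_ne_none p)
  have hxa := mem_of_mem_unpairedLow hx.1
  have hxb := notMem_of_mem_unpairedLow hx.1
  rw [fStarPair_of_isGreatest hx, Option.some_inj] at h
  subst h
  split_ifs with hc
  · have hy := isLeast_insert_unpairedHigh hx.1 le_rfl
    rw [← coe_insert, ← unpairedHigh_erase_succ_insert hx hc.1 hc.2] at hy
    rw [eStarPair_of_isLeast hy, if_pos (by simp [hxa])]
    simp [insert_erase hc.1, erase_insert hxb]
  · have hy := isLeast_insert_unpairedHigh hx.1 (Nat.le_succ x)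
    rw [← coe_insert, ← unpairedHigh_erase_insert hx] at hy
    rw [eStarPair_of_isLeast hy, if_neg]
    · simp [insert_erase hxa, erase_insert hxb]
    · rintro ⟨hx1, hza, hzb⟩
      obtain ⟨z, rfl⟩ : ∃ z, x = z + 1 := ⟨x - 1, by omega⟩
      rw [add_tsub_cancel_right] at hza hzb
      exact hbr (braidLow_of_mem_unpairedLow hx.1 (mem_of_mem_erase hza)
        ((mem_insert.1 hzb).resolve_left (by omega)))

theorem fStarPair_eStarPair {p : Finset ℕ × Finset ℕ} (hbr : ¬ BraidHigh a b)
    (h : eStarPair a b = some p) : fStarPair p.1 p.2 = some (a, b) := by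
  obtain ⟨y, hy⟩ := exists_isLeast_of_eStarPair_ne_none (h ▸ Option.some_ne_none p)
  have hyb := mem_of_mem_unpairedHigh hy.1
  have hya := notMem_of_mem_unpairedHigh hy.1
  rw [eStarPair_of_isLeast hy, Option.some_inj] at h
  subst h
  split_ifs with hc
  · obtain ⟨z, rfl⟩ : ∃ z, y = z + 1 := ⟨y - 1, by omega⟩
    simp only [add_tsub_cancel_right] at hc ⊢
    have hx := isGreatest_insert_unpairedLow hy.1 le_rfl
    rw [← coe_insert, ← unpairedLow_insert_succ_erase hy hc.2.1 hc.2.2] at hx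
    rw [fStarPair_of_isGreatest hx, if_pos (by simp [hyb])]
    simp [erase_insert hya, insert_erase hc.2.2]
  · have hx := isGreatest_insert_unpairedLow hy.1 (Nat.le_succ y)
    rw [← coe_insert, ← unpairedLow_insert_erase hy] at hx
    rw [fStarPair_of_isGreatest hx, if_neg]
    · simp [erase_insert hya, insert_erase hyb]
    · rintro ⟨hya', hyb'⟩
      exact hbr (braidHigh_of_mem_unpairedHigh hy.1 ((mem_insert.1 hya').resolve_left (by omega))
        (mem_of_mem_erase hyb'))

end Operators

lemma factorWord_succ (m : ℕ) (h : ℕ → Finset ℕ) :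
    factorWord (m + 1) h = descWord (h m) ++ factorWord m h := by
  simp [factorWord, List.range_succ]

lemma infix_factorWord {m i : ℕ} (h : ℕ → Finset ℕ) (hi : i + 1 < m) :
    descWord (h (i + 1)) ++ descWord (h i) <:+: factorWord m h := by
  induction m, hi using Nat.le_induction with
  | base => exact ⟨[], factorWord i h, by simp [factorWord_succ]⟩
  | succ m _ ih => exact ih.trans (factorWord_succ m h ▸ (List.suffix_append _ _).isInfix)

lemma update_update_eq_self (h : ℕ → Finset ℕ) (i : ℕ) (a b : Finset ℕ) :
    Function.update (Function.update (Function.update (Function.update h i a) (i + 1) b)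
      i (h i)) (i + 1) (h (i + 1)) = h := by
  ext j : 1
  simp only [Function.update_apply]
  split_ifs <;> simp_all

lemma eq_update_update_of_fStar_eq_some {i : ℕ} {h h' : ℕ → Finset ℕ}
    (hf : fStar i h = some h') : ∃ p, fStarPair (h i) (h (i + 1)) = some p ∧
      h' = Function.update (Function.update h i p.1) (i + 1) p.2 := by
  rw [fStar] at hf
  rcases hp : fStarPair (h i) (h (i + 1)) with _ | ⟨a, b⟩ <;> rw [hp] at hf
  · exact absurd hf nofun
  · exact ⟨(a, b), rfl, (Option.some_inj.1 hf).symm⟩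

lemma eq_update_update_of_eStar_eq_some {i : ℕ} {h h' : ℕ → Finset ℕ}
    (he : eStar i h = some h') : ∃ p, eStarPair (h i) (h (i + 1)) = some p ∧
      h' = Function.update (Function.update h i p.1) (i + 1) p.2 := by
  rw [eStar] at he
  rcases hp : eStarPair (h i) (h (i + 1)) with _ | ⟨a, b⟩ <;> rw [hp] at he
  · exact absurd he nofun
  · exact ⟨(a, b), rfl, (Option.some_inj.1 he).symm⟩

lemma eStar_update_update {i : ℕ} {h : ℕ → Finset ℕ} {p : Finset ℕ × Finset ℕ}
    (hp : eStarPair p.1 p.2 = some (h i, h (i + 1))) :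
    eStar i (Function.update (Function.update h i p.1) (i + 1) p.2) = some h := by
  simp only [eStar, Function.update_self, Function.update_of_ne (Nat.succ_ne_self i).symm, hp,
    update_update_eq_self]

lemma fStar_update_update {i : ℕ} {h : ℕ → Finset ℕ} {p : Finset ℕ × Finset ℕ}
    (hp : fStarPair p.1 p.2 = some (h i, h (i + 1))) :
    fStar i (Function.update (Function.update h i p.1) (i + 1) p.2) = some h := by
  simp only [fStar, Function.update_self, Function.update_of_ne (Nat.succ_ne_self i).symm, hp,
    update_update_eq_self]

/-- The crystal operators `e_i^⋆` and `f_i^⋆` on fully-commutative decreasing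
factorizations are partial inverses of each other. -/
theorem eStar_fStar_partial_inverse (m i : ℕ) (h : ℕ → Finset ℕ)
    (hi : i + 1 < m)
    (hfc : FullyCommutative (factorWord m h)) :
    (∀ h', fStar i h = some h' → eStar i h' = some h) ∧
    (∀ h', eStar i h = some h' → fStar i h' = some h) := by
  have hpair := hfc.of_infix (infix_factorWord h hi)
  refine ⟨fun h' hf => ?_, fun h' he => ?_⟩
  · obtain ⟨p, hp, rfl⟩ := eq_update_update_of_fStar_eq_some hf
    exact eStar_update_update
      (eStarPair_fStarPair (fun hb => not_fullyCommutative_of_braidLow hb hpair) hp)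
  · obtain ⟨p, hp, rfl⟩ := eq_update_update_of_eStar_eq_some he
    exact fStar_update_update
      (fStarPair_eStarPair (fun hb => not_fullyCommutative_of_braidHigh hb hpair) hp)
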